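/- Consider a finite MDP such that P^π g⋆ = g⋆ for every deterministic policy π, where (g⋆, h⋆) is a solution of the modified Bellman equations. Run Rx-VI with coefficients satisfying 0 < λ_j < 1 for all j ≥ 1, with π_k a greedy policy for V^k. Then for every k ≥ 1, ‖g⋆ − g^{π_k}‖_∞ ≤ ‖TV^k − V^k − g⋆‖_∞ ≤ 2‖V^0 − h⋆‖_∞ / √(π ∑_{i=1}^k λ_i(1−λ_i)), where π in the denominator denotes the mathematical constant 3.141592…. -/

import Mathlib

open Finset Filter

noncomputable section

/-- A finite Markov decision process: a transition kernel `P` assigning to each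
state-action pair a probability distribution over states, and a reward `r`. -/
structure FinMDP (S A : Type) [Fintype S] [Fintype A] where
  P : S → A → S → ℝ
  r : S → A → ℝ
  P_nonneg : ∀ s a s', 0 ≤ P s a s'
  P_sum_one : ∀ s a, ∑ s', P s a s' = 1

variable {S A : Type} [Fintype S] [Nonempty S] [Fintype A] [Nonempty A]

/-- The transition operator `P^π` induced by a deterministic policy `π`. -/
def Pop (M : FinMDP S A) (p : S → A) (V : S → ℝ) : S → ℝ :=
  fun s => ∑ s', M.P s (p s) s' * V s'

/-- The reward vector `r^π` induced by a deterministic policy `π`. -/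
def rPol (M : FinMDP S A) (p : S → A) : S → ℝ := fun s => M.r s (p s)

/-- The Bellman optimality operator `T`. -/
def bellman (M : FinMDP S A) (V : S → ℝ) : S → ℝ :=
  fun s => Finset.univ.sup' Finset.univ_nonempty
    (fun a => M.r s a + ∑ s', M.P s a s' * V s')

/-- A deterministic policy `π` is greedy for `V` if `r^π + P^π V = T V`. -/
def IsGreedy (M : FinMDP S A) (p : S → A) (V : S → ℝ) : Prop :=
  rPol M p + Pop M p V = bellman M V

/-- `(g, h)` is a solution of the modified Bellman equations:
`max_π P^π g = g`, `max_π (r^π + P^π h) = h + g` (entrywise maxima over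
deterministic policies, equivalently over actions), and some deterministic
policy attains both maxima simultaneously. -/
def IsMBESolution (M : FinMDP S A) (g h : S → ℝ) : Prop :=
  (∀ s, (Finset.univ.sup' Finset.univ_nonempty
      fun a => ∑ s', M.P s a s' * g s') = g s) ∧
  (∀ s, bellman M h s = h s + g s) ∧
  (∃ p : S → A, Pop M p g = g ∧ rPol M p + Pop M p h = h + g)

/-- The average reward `g^π(s) = liminf_{T→∞} (1/T) ∑_{t<T} ((P^π)^t r^π)(s)`. -/
def avgReward (M : FinMDP S A) (p : S → A) : S → ℝ :=
  fun s => Filter.liminf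
    (fun T : ℕ => (1 / (T : ℝ)) * ∑ t ∈ Finset.range T, ((Pop M p)^[t] (rPol M p)) s)
    Filter.atTop


noncomputable section
namespace KMRate
open Finset

def cQ (j : ℤ) : ℝ := (if 1 ≤ j then (1:ℝ) else 0) - (if j ≤ -1 then (1:ℝ) else 0)
def cP (j : ℤ) : ℝ := cQ (j + 1)

lemma cQ_neg (j : ℤ) : cQ (-j) = - cQ j := by
  unfold cQ; split_ifs <;> (try ring) <;> (exfalso; omega)
lemma cP_of_nonneg {j : ℤ} (h : 0 ≤ j) : cP j = 1 := by
  unfold cP cQ; rw [if_pos (by omega), if_neg (by omega)]; ring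
lemma cP_sub_one (j : ℤ) : cP (j - 1) = cQ j := by unfold cP; congr 1; ring
lemma cP_split (j : ℤ) : cP j = cQ j + (if j = 0 then 1 else 0) + (if j = -1 then 1 else 0) := by
  unfold cP cQ; split_ifs <;> (try ring) <;> (exfalso; omega)

def q (α : ℕ → ℝ) : ℕ → ℤ → ℝ
  | 0 => fun j => if j = 0 then 1 else 0
  | n + 1 => fun j => (1 - α (n+1)) * q α n j + α (n+1) * q α n (j - 1)

lemma q_support (α : ℕ → ℝ) : ∀ n : ℕ, ∀ j : ℤ, (j < 0 ∨ (n : ℤ) < j) → q α n j = 0 := by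
  intro n
  induction n with
  | zero => intro j hj; simp only [q]; rw [if_neg (by omega)]
  | succ n ih =>
    intro j hj; simp only [q]
    rw [ih j (by omega), ih (j-1) (by omega)]; ring

lemma q_shrink (α : ℕ → ℝ) (n : ℕ) (f : ℤ → ℝ) {K : Finset ℤ}
    (hK : Finset.Icc (0:ℤ) n ⊆ K) :
    ∑ k ∈ K, q α n k * f k = ∑ k ∈ Finset.Icc (0:ℤ) n, q α n k * f k := by
  refine (Finset.sum_subset hK ?_).symm
  intro x _ hx
  rw [q_support α n x (by simpa only [Finset.mem_Icc, not_and_or, not_le] using hx)]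
  ring

lemma shift_sum (f : ℤ → ℝ) (a b : ℤ) :
    ∑ k ∈ Finset.Icc a b, f (k - 1) = ∑ k ∈ Finset.Icc (a-1) (b-1), f k := by
  rw [show Finset.Icc (a-1) (b-1) = (Finset.Icc a b).map (addRightEmbedding (-1)) by
    rw [Finset.map_add_right_Icc]; ring_nf]
  rw [Finset.sum_map]
  exact Finset.sum_congr rfl fun x _ => by
    simp only [addRightEmbedding_apply]; congr 1

/-- The master one-step lemma for sums against `q α (n+1)`. -/
lemma q_step (α : ℕ → ℝ) (n : ℕ) (F G : ℤ → ℝ) (hFG : ∀ j : ℤ, F (j+1) = G j) :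
    ∑ k ∈ Finset.Icc (0:ℤ) ((n+1 : ℕ) : ℤ), q α (n+1) k * F k
    = (1 - α (n+1)) * ∑ k ∈ Finset.Icc (0:ℤ) (n:ℤ), q α n k * F k
      + α (n+1) * ∑ k ∈ Finset.Icc (0:ℤ) (n:ℤ), q α n k * G k := by
  simp only [q]
  push_cast
  rw [show ∑ k ∈ Finset.Icc (0:ℤ) ((n:ℤ)+1), ((1 - α (n+1)) * q α n k + α (n+1) * q α n (k-1)) * F k
      = (∑ k ∈ Finset.Icc (0:ℤ) ((n:ℤ)+1), (1 - α (n+1)) * (q α n k * F k))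
        + ∑ k ∈ Finset.Icc (0:ℤ) ((n:ℤ)+1), α (n+1) * (q α n (k-1) * F k) by
    rw [← Finset.sum_add_distrib]; exact Finset.sum_congr rfl fun x _ => by ring]
  rw [← Finset.mul_sum, ← Finset.mul_sum]
  congr 1
  · congr 1
    exact q_shrink α n F (by intro x hx; simp only [Finset.mem_Icc] at *; omega)
  · congr 1
    have h1 : ∑ k ∈ Finset.Icc (0:ℤ) ((n:ℤ)+1), q α n (k-1) * F k
        = ∑ k ∈ Finset.Icc (-1:ℤ) (n:ℤ), q α n k * F (k+1) := by
      have := shift_sum (fun j => q α n j * F (j+1)) 0 ((n:ℤ)+1)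
      rw [show (0:ℤ)-1 = -1 by ring, show (n:ℤ)+1-1 = (n:ℤ) by ring] at this
      rw [← this]
      exact Finset.sum_congr rfl fun x _ => by rw [show x - 1 + 1 = x by ring]
    rw [h1, q_shrink α n (fun k => F (k+1))
        (by intro x hx; simp only [Finset.mem_Icc] at *; omega)]
    exact Finset.sum_congr rfl fun x _ => by rw [hFG]

lemma q_sum (α : ℕ → ℝ) (n : ℕ) :
    ∑ j ∈ Finset.Icc (0:ℤ) (n:ℤ), q α n j = 1 := by
  induction n with
  | zero => simp [q]
  | succ n ih =>
    have h := q_step α n (fun _ => (1:ℝ)) (fun _ => (1:ℝ)) (fun _ => rfl)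
    simp only [mul_one] at h
    rw [h, ih]; ring

lemma q_nonneg (α : ℕ → ℝ) (hα : ∀ i, 1 ≤ i → 0 ≤ α i ∧ α i ≤ 1) :
    ∀ n : ℕ, ∀ j : ℤ, 0 ≤ q α n j := by
  intro n
  induction n with
  | zero => intro j; simp only [q]; split <;> norm_num
  | succ n ih =>
    intro j; simp only [q]
    have h1 := (hα (n+1) (by omega)).1
    have h2 := (hα (n+1) (by omega)).2
    have := ih j; have := ih (j-1)
    nlinarith

def Pm (α : ℕ → ℝ) (m n : ℕ) : ℝ :=
  ∑ k ∈ Finset.Icc (0:ℤ) (n:ℤ), q α n k * ∑ l ∈ Finset.Icc (0:ℤ) (m:ℤ), q α m l * cP (k - l)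
def Qm (α : ℕ → ℝ) (m n : ℕ) : ℝ :=
  ∑ k ∈ Finset.Icc (0:ℤ) (n:ℤ), q α n k * ∑ l ∈ Finset.Icc (0:ℤ) (m:ℤ), q α m l * cQ (k - l)

lemma Pm_succ_m (α : ℕ → ℝ) (m n : ℕ) :
    Pm α (m+1) n = (1 - α (m+1)) * Pm α m n + α (m+1) * Qm α m n := by
  unfold Pm Qm
  rw [show (1 - α (m+1)) * (∑ k ∈ Finset.Icc (0:ℤ) (n:ℤ), q α n k * ∑ l ∈ Finset.Icc (0:ℤ) (m:ℤ), q α m l * cP (k - l))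
      + α (m+1) * (∑ k ∈ Finset.Icc (0:ℤ) (n:ℤ), q α n k * ∑ l ∈ Finset.Icc (0:ℤ) (m:ℤ), q α m l * cQ (k - l))
      = ∑ k ∈ Finset.Icc (0:ℤ) (n:ℤ), q α n k *
          ((1 - α (m+1)) * (∑ l ∈ Finset.Icc (0:ℤ) (m:ℤ), q α m l * cP (k - l))
            + α (m+1) * (∑ l ∈ Finset.Icc (0:ℤ) (m:ℤ), q α m l * cQ (k - l))) by
    rw [Finset.mul_sum, Finset.mul_sum, ← Finset.sum_add_distrib]
    exact Finset.sum_congr rfl fun x _ => by ring]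
  refine Finset.sum_congr rfl fun k _ => ?_
  congr 1
  exact q_step α m (fun l => cP (k - l)) (fun l => cQ (k - l))
    (fun j => by show cP (k - (j+1)) = cQ (k - j)
                 rw [show k - (j+1) = (k - j) - 1 by ring, cP_sub_one])

lemma Qm_succ_n (α : ℕ → ℝ) (m n : ℕ) :
    Qm α m (n+1) = (1 - α (n+1)) * Qm α m n + α (n+1) * Pm α m n := by
  unfold Pm Qm
  exact q_step α n (fun k => ∑ l ∈ Finset.Icc (0:ℤ) (m:ℤ), q α m l * cQ (k - l))
    (fun k => ∑ l ∈ Finset.Icc (0:ℤ) (m:ℤ), q α m l * cP (k - l))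
    (fun j => by
      show (∑ l ∈ Finset.Icc (0:ℤ) (m:ℤ), q α m l * cQ (j + 1 - l)) = _
      exact Finset.sum_congr rfl fun x _ => by
        rw [show j + 1 - x = (j - x) + 1 by ring]; rfl)

lemma Pm_zero (α : ℕ → ℝ) (n : ℕ) : Pm α 0 n = 1 := by
  unfold Pm
  rw [show ((0:ℕ):ℤ) = (0:ℤ) by norm_num]
  rw [show ∑ k ∈ Finset.Icc (0:ℤ) (n:ℤ), q α n k * ∑ l ∈ Finset.Icc (0:ℤ) (0:ℤ), q α 0 l * cP (k - l)
      = ∑ k ∈ Finset.Icc (0:ℤ) (n:ℤ), q α n k from Finset.sum_congr rfl fun k hk => by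
    rw [Finset.Icc_self, Finset.sum_singleton]
    have : q α 0 0 = 1 := by simp [q]
    rw [this, sub_zero, cP_of_nonneg (Finset.mem_Icc.mp hk).1]
    ring]
  exact q_sum α n

lemma qq_cQ_zero (α : ℕ → ℝ) (m : ℕ) :
    ∑ k ∈ Finset.Icc (0:ℤ) (m:ℤ), ∑ l ∈ Finset.Icc (0:ℤ) (m:ℤ), q α m k * q α m l * cQ (k - l) = 0 := by
  set S := ∑ k ∈ Finset.Icc (0:ℤ) (m:ℤ), ∑ l ∈ Finset.Icc (0:ℤ) (m:ℤ), q α m k * q α m l * cQ (k - l) with hS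
  have h : S = -S := by
    nth_rewrite 1 [hS, Finset.sum_comm]
    rw [show ∑ l ∈ Finset.Icc (0:ℤ) (m:ℤ), ∑ k ∈ Finset.Icc (0:ℤ) (m:ℤ), q α m k * q α m l * cQ (k - l)
        = ∑ l ∈ Finset.Icc (0:ℤ) (m:ℤ), ∑ k ∈ Finset.Icc (0:ℤ) (m:ℤ), -(q α m l * q α m k * cQ (l - k)) from
      Finset.sum_congr rfl fun l _ => Finset.sum_congr rfl fun k _ => by
        rw [show k - l = -(l - k) by ring, cQ_neg]; ring]
    rw [hS]
    simp only [Finset.sum_neg_distrib]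
  linarith

lemma Qm_diag (α : ℕ → ℝ) (m : ℕ) : Qm α m m = 0 := by
  unfold Qm
  rw [← qq_cQ_zero α m]
  exact Finset.sum_congr rfl fun k _ => by rw [Finset.mul_sum]; exact Finset.sum_congr rfl fun l _ => by ring

lemma Pm_diag (α : ℕ → ℝ) (n : ℕ) :
    Pm α n n = (∑ k ∈ Finset.Icc (0:ℤ) (n:ℤ), q α n k * q α n k)
      + ∑ k ∈ Finset.Icc (0:ℤ) (n:ℤ), q α n k * q α n (k+1) := by
  unfold Pm
  rw [show ∑ k ∈ Finset.Icc (0:ℤ) (n:ℤ), q α n k * ∑ l ∈ Finset.Icc (0:ℤ) (n:ℤ), q α n l * cP (k - l)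
      = (∑ k ∈ Finset.Icc (0:ℤ) (n:ℤ), ∑ l ∈ Finset.Icc (0:ℤ) (n:ℤ), q α n k * q α n l * cQ (k - l))
        + ((∑ k ∈ Finset.Icc (0:ℤ) (n:ℤ), ∑ l ∈ Finset.Icc (0:ℤ) (n:ℤ),
              (if l = k then q α n k * q α n l else 0))
          + ∑ k ∈ Finset.Icc (0:ℤ) (n:ℤ), ∑ l ∈ Finset.Icc (0:ℤ) (n:ℤ),
              (if l = k + 1 then q α n k * q α n l else 0)) by
    rw [← Finset.sum_add_distrib, ← Finset.sum_add_distrib]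
    refine Finset.sum_congr rfl fun k _ => ?_
    rw [Finset.mul_sum, ← Finset.sum_add_distrib, ← Finset.sum_add_distrib]
    refine Finset.sum_congr rfl fun l _ => ?_
    rw [cP_split (k - l)]
    have e1 : (if k - l = 0 then (1:ℝ) else 0) = (if l = k then 1 else 0) := by
      split_ifs <;> (try rfl) <;> (exfalso; omega)
    have e2 : (if k - l = -1 then (1:ℝ) else 0) = (if l = k + 1 then 1 else 0) := by
      split_ifs <;> (try rfl) <;> (exfalso; omega)
    rw [e1, e2]
    split_ifs <;> ring]
  rw [qq_cQ_zero α n, zero_add]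
  congr 1
  · refine Finset.sum_congr rfl fun k hk => ?_
    rw [Finset.sum_ite_eq' (Finset.Icc (0:ℤ) (n:ℤ)) k (fun l => q α n k * q α n l), if_pos hk]
  · refine Finset.sum_congr rfl fun k hk => ?_
    rw [Finset.sum_ite_eq' (Finset.Icc (0:ℤ) (n:ℤ)) (k+1) (fun l => q α n k * q α n l)]
    split_ifs with h
    · rfl
    · rw [q_support α n (k+1) (by simp only [Finset.mem_Icc] at *; omega)]
      ring


open intervalIntegral MeasureTheory

/-! integral evaluation lemmas -/

lemma Cint (r : ℤ) :
    ∫ t in (-(1:ℝ)/2)..(1/2), Real.cos (2*Real.pi*t*(r:ℝ))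
      = if r = 0 then (1:ℝ) else 0 := by
  rcases eq_or_ne r 0 with h | h
  · subst h
    simp
    norm_num
  · rw [if_neg h]
    have hc : (2*Real.pi*(r:ℝ)) ≠ 0 := by
      have := Real.pi_ne_zero
      have : (r:ℝ) ≠ 0 := Int.cast_ne_zero.mpr h
      positivity
    have := intervalIntegral.integral_comp_mul_left (a := (-(1:ℝ)/2)) (b := (1:ℝ)/2)
      (c := 2*Real.pi*(r:ℝ)) Real.cos hc
    rw [show (fun t => Real.cos (2*Real.pi*t*(r:ℝ))) = (fun t => Real.cos (2*Real.pi*(r:ℝ)*t)) by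
      funext t; ring_nf]
    rw [this, integral_cos]
    have h1 : 2*Real.pi*(r:ℝ)*((1:ℝ)/2) = (r:ℝ)*Real.pi := by ring
    have h2 : 2*Real.pi*(r:ℝ)*(-(1:ℝ)/2) = -((r:ℝ)*Real.pi) := by ring
    rw [h1, h2, Real.sin_neg, Real.sin_int_mul_pi]
    simp

lemma cos_int_integrable (m : ℤ) (a b : ℝ) :
    IntervalIntegrable (fun t => Real.cos (2*Real.pi*t*(m:ℝ))) MeasureTheory.volume a b := by
  apply Continuous.intervalIntegrable
  fun_prop

lemma Jint (m : ℤ) :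
    ∫ t in (-(1:ℝ)/2)..(1/2), Real.cos (2*Real.pi*t*(m:ℝ)) * (1 + Real.cos (2*Real.pi*t))
      = (if m = 0 then (1:ℝ) else 0) + (1/2) * (if m = 1 then (1:ℝ) else 0)
        + (1/2) * (if m = -1 then (1:ℝ) else 0) := by
  have hpt : ∀ t : ℝ, Real.cos (2*Real.pi*t*(m:ℝ)) * (1 + Real.cos (2*Real.pi*t))
      = Real.cos (2*Real.pi*t*(m:ℝ)) + (1/2) * Real.cos (2*Real.pi*t*((m+1:ℤ):ℝ))
        + (1/2) * Real.cos (2*Real.pi*t*((m-1:ℤ):ℝ)) := by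
    intro t
    have e1 : 2*Real.pi*t*((m+1:ℤ):ℝ) = 2*Real.pi*t*(m:ℝ) + 2*Real.pi*t := by push_cast; ring
    have e2 : 2*Real.pi*t*((m-1:ℤ):ℝ) = 2*Real.pi*t*(m:ℝ) - 2*Real.pi*t := by push_cast; ring
    rw [e1, e2, Real.cos_add, Real.cos_sub]
    ring
  rw [intervalIntegral.integral_congr (g :=
      fun t => Real.cos (2*Real.pi*t*(m:ℝ)) + (1/2) * Real.cos (2*Real.pi*t*((m+1:ℤ):ℝ))
        + (1/2) * Real.cos (2*Real.pi*t*((m-1:ℤ):ℝ))) (fun t _ => hpt t)]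
  rw [intervalIntegral.integral_add (((cos_int_integrable m _ _).add
        ((cos_int_integrable (m+1) _ _).const_mul _)))
      ((cos_int_integrable (m-1) _ _).const_mul _),
    intervalIntegral.integral_add (cos_int_integrable m _ _)
      ((cos_int_integrable (m+1) _ _).const_mul _),
    intervalIntegral.integral_const_mul, intervalIntegral.integral_const_mul,
    Cint, Cint, Cint]
  split_ifs <;> (try norm_num) <;> (exfalso; omega)


def Aq (α : ℕ → ℝ) (n : ℕ) (t : ℝ) : ℝ :=
  ∑ k ∈ Finset.Icc (0:ℤ) (n:ℤ), q α n k * Real.cos (2*Real.pi*t*(k:ℝ))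
def Bq (α : ℕ → ℝ) (n : ℕ) (t : ℝ) : ℝ :=
  ∑ k ∈ Finset.Icc (0:ℤ) (n:ℤ), q α n k * Real.sin (2*Real.pi*t*(k:ℝ))

lemma Gq_prod (α : ℕ → ℝ) (n : ℕ) (t : ℝ) :
    (Aq α n t)^2 + (Bq α n t)^2
      = ∏ i ∈ Finset.Icc 1 n, (1 - 4 * (α i * (1 - α i)) * Real.sin (Real.pi*t)^2) := by
  induction n with
  | zero =>
    simp only [Aq, Bq]
    norm_num
    simp [q]
  | succ n ih =>
    have hA : Aq α (n+1) t = (1 - α (n+1)) * Aq α n t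
        + α (n+1) * (Real.cos (2*Real.pi*t) * Aq α n t - Real.sin (2*Real.pi*t) * Bq α n t) := by
      unfold Aq Bq
      rw [q_step α n (fun k => Real.cos (2*Real.pi*t*(k:ℝ)))
        (fun k => Real.cos (2*Real.pi*t*(k:ℝ)) * Real.cos (2*Real.pi*t)
          - Real.sin (2*Real.pi*t*(k:ℝ)) * Real.sin (2*Real.pi*t))
        (fun j => by
          show Real.cos (2*Real.pi*t*((j+1:ℤ):ℝ)) = _
          rw [show 2*Real.pi*t*((j+1:ℤ):ℝ) = 2*Real.pi*t*(j:ℝ) + 2*Real.pi*t by push_cast; ring,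
            Real.cos_add])]
      congr 1
      congr 1
      rw [Finset.mul_sum, Finset.mul_sum, ← Finset.sum_sub_distrib]
      exact Finset.sum_congr rfl fun k _ => by ring
    have hB : Bq α (n+1) t = (1 - α (n+1)) * Bq α n t
        + α (n+1) * (Real.cos (2*Real.pi*t) * Bq α n t + Real.sin (2*Real.pi*t) * Aq α n t) := by
      unfold Aq Bq
      rw [q_step α n (fun k => Real.sin (2*Real.pi*t*(k:ℝ)))
        (fun k => Real.sin (2*Real.pi*t*(k:ℝ)) * Real.cos (2*Real.pi*t)
          + Real.cos (2*Real.pi*t*(k:ℝ)) * Real.sin (2*Real.pi*t))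
        (fun j => by
          show Real.sin (2*Real.pi*t*((j+1:ℤ):ℝ)) = _
          rw [show 2*Real.pi*t*((j+1:ℤ):ℝ) = 2*Real.pi*t*(j:ℝ) + 2*Real.pi*t by push_cast; ring,
            Real.sin_add])]
      congr 1
      congr 1
      rw [Finset.mul_sum, Finset.mul_sum, ← Finset.sum_add_distrib]
      exact Finset.sum_congr rfl fun k _ => by ring
    rw [Finset.prod_Icc_succ_top (by omega : 1 ≤ n+1), ← ih, hA, hB]
    have hpy : Real.sin (2*Real.pi*t)^2 + Real.cos (2*Real.pi*t)^2 = 1 :=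
      Real.sin_sq_add_cos_sq _
    have hhalf : 1 - Real.cos (2*Real.pi*t) = 2 * Real.sin (Real.pi*t)^2 := by
      have h := Real.cos_two_mul (Real.pi*t)
      have h2 := Real.sin_sq_add_cos_sq (Real.pi*t)
      rw [show 2*Real.pi*t = 2*(Real.pi*t) by ring, h]
      nlinarith
    set a := α (n+1)
    set c := Real.cos (2*Real.pi*t)
    set s := Real.sin (2*Real.pi*t)
    set A := Aq α n t
    set B := Bq α n t
    have expand : ((1-a)*A + a*(c*A - s*B))^2 + ((1-a)*B + a*(c*B + s*A))^2
        = ((1-a)^2 + a^2*(s^2+c^2) + 2*a*(1-a)*c) * (A^2 + B^2) := by ring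
    rw [expand, hpy]
    have : (1-a)^2 + a^2*1 + 2*a*(1-a)*c = 1 - 4*(a*(1-a))*Real.sin (Real.pi*t)^2 := by
      nlinarith [hhalf]
    rw [this]
    ring

lemma cross_shift (α : ℕ → ℝ) (n : ℕ) :
    ∑ k ∈ Finset.Icc (0:ℤ) (n:ℤ), q α n k * q α n (k-1)
      = ∑ k ∈ Finset.Icc (0:ℤ) (n:ℤ), q α n k * q α n (k+1) := by
  have h1 : ∑ k ∈ Finset.Icc (0:ℤ) (n:ℤ), q α n k * q α n (k-1)
      = ∑ k ∈ Finset.Icc (-1:ℤ) ((n:ℤ)-1), q α n (k+1) * q α n k := by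
    have := shift_sum (fun j => q α n (j+1) * q α n j) 0 (n:ℤ)
    rw [show (0:ℤ)-1 = -1 by ring] at this
    rw [← this]
    exact Finset.sum_congr rfl fun k _ => by rw [show k - 1 + 1 = k by ring]
  rw [h1]
  have h2 : ∀ K : Finset ℤ, Finset.Icc (0:ℤ) ((n:ℤ)-1) ⊆ K → K ⊆ Finset.Icc (-1:ℤ) (n:ℤ) →
      ∑ k ∈ K, q α n (k+1) * q α n k = ∑ k ∈ Finset.Icc (0:ℤ) ((n:ℤ)-1), q α n (k+1) * q α n k := by
    intro K hK1 hK2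
    refine (Finset.sum_subset hK1 ?_).symm
    intro x hx hx2
    have hx3 := hK2 hx
    simp only [Finset.mem_Icc] at hx2 hx3
    rcases (by omega : x = -1 ∨ x = (n:ℤ)) with h | h
    · rw [h, q_support α n (-1) (by omega)]; ring
    · rw [h, q_support α n ((n:ℤ)+1) (by omega)]; ring
  rw [h2 (Finset.Icc (-1:ℤ) ((n:ℤ)-1)) (by intro x; simp only [Finset.mem_Icc]; omega)
        (by intro x; simp only [Finset.mem_Icc]; omega)]
  rw [show ∑ k ∈ Finset.Icc (0:ℤ) (n:ℤ), q α n k * q α n (k+1)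
      = ∑ k ∈ Finset.Icc (0:ℤ) (n:ℤ), q α n (k+1) * q α n k from
    Finset.sum_congr rfl fun k _ => by ring]
  rw [h2 (Finset.Icc (0:ℤ) (n:ℤ)) (by intro x; simp only [Finset.mem_Icc]; omega)
        (by intro x; simp only [Finset.mem_Icc]; omega)]

lemma orth (α : ℕ → ℝ) (n : ℕ) :
    ∫ t in (-(1:ℝ)/2)..(1/2), ((Aq α n t)^2 + (Bq α n t)^2) * (1 + Real.cos (2*Real.pi*t))
      = Pm α n n := by
  set W := Finset.Icc (0:ℤ) (n:ℤ) with hW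
  have hpt : ∀ t : ℝ, ((Aq α n t)^2 + (Bq α n t)^2) * (1 + Real.cos (2*Real.pi*t))
      = ∑ k ∈ W, ∑ l ∈ W, (q α n k * q α n l)
          * (Real.cos (2*Real.pi*t*((k - l : ℤ):ℝ)) * (1 + Real.cos (2*Real.pi*t))) := by
    intro t
    have hA2 : (Aq α n t)^2 + (Bq α n t)^2
        = ∑ k ∈ W, ∑ l ∈ W, (q α n k * q α n l) * Real.cos (2*Real.pi*t*((k - l : ℤ):ℝ)) := by
      unfold Aq Bq
      rw [sq, sq, Finset.sum_mul_sum, Finset.sum_mul_sum, ← Finset.sum_add_distrib]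
      refine Finset.sum_congr rfl fun k _ => ?_
      rw [← Finset.sum_add_distrib]
      refine Finset.sum_congr rfl fun l _ => ?_
      rw [show 2*Real.pi*t*((k - l : ℤ):ℝ) = 2*Real.pi*t*(k:ℝ) - 2*Real.pi*t*(l:ℝ) by
        push_cast; ring, Real.cos_sub]
      ring
    rw [hA2, Finset.sum_mul]
    refine Finset.sum_congr rfl fun k _ => ?_
    rw [Finset.sum_mul]
    exact Finset.sum_congr rfl fun l _ => by ring
  rw [intervalIntegral.integral_congr (fun t _ => hpt t)]
  rw [intervalIntegral.integral_finset_sum (fun k _ => by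
    apply MeasureTheory.IntegrableOn.intervalIntegrable
    apply Continuous.integrableOn_uIcc
    fun_prop)]
  rw [Finset.sum_congr rfl (fun k _ => intervalIntegral.integral_finset_sum (fun l _ => by
    apply Continuous.intervalIntegrable
    fun_prop))]
  rw [Finset.sum_congr rfl (fun k _ => Finset.sum_congr rfl (fun l _ => by
    rw [intervalIntegral.integral_const_mul, Jint (k - l)]))]
  have hker : ∀ k ∈ W, ∑ l ∈ W, (q α n k * q α n l)
      * ((if k - l = 0 then (1:ℝ) else 0) + (1/2) * (if k - l = 1 then (1:ℝ) else 0)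
        + (1/2) * (if k - l = -1 then (1:ℝ) else 0))
      = q α n k * q α n k + (1/2) * (q α n k * q α n (k-1)) + (1/2) * (q α n k * q α n (k+1)) := by
    intro k hk
    have split3 : ∀ l ∈ W, (q α n k * q α n l)
        * ((if k - l = 0 then (1:ℝ) else 0) + (1/2) * (if k - l = 1 then (1:ℝ) else 0)
          + (1/2) * (if k - l = -1 then (1:ℝ) else 0))
        = (if l = k then q α n k * q α n l else 0)
          + ((if l = k - 1 then (1/2) * (q α n k * q α n l) else 0)
          + (if l = k + 1 then (1/2) * (q α n k * q α n l) else 0)) := by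
      intro l _
      have e0 : (k - l = 0) ↔ (l = k) := by omega
      have e1 : (k - l = 1) ↔ (l = k - 1) := by omega
      have e2 : (k - l = -1) ↔ (l = k + 1) := by omega
      simp only [e0, e1, e2]
      split_ifs <;> (try ring) <;> (exfalso; omega)
    rw [Finset.sum_congr rfl split3, Finset.sum_add_distrib, Finset.sum_add_distrib]
    rw [Finset.sum_ite_eq' W k (fun l => q α n k * q α n l), if_pos hk]
    rw [Finset.sum_ite_eq' W (k-1) (fun l => (1/2) * (q α n k * q α n l))]
    rw [Finset.sum_ite_eq' W (k+1) (fun l => (1/2) * (q α n k * q α n l))]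
    have hc1 : (if k - 1 ∈ W then (1/2) * (q α n k * q α n (k-1)) else 0)
        = (1/2) * (q α n k * q α n (k-1)) := by
      split_ifs with h
      · rfl
      · rw [q_support α n (k-1) (by simp only [hW, Finset.mem_Icc] at *; omega)]; ring
    have hc2 : (if k + 1 ∈ W then (1/2) * (q α n k * q α n (k+1)) else 0)
        = (1/2) * (q α n k * q α n (k+1)) := by
      split_ifs with h
      · rfl
      · rw [q_support α n (k+1) (by simp only [hW, Finset.mem_Icc] at *; omega)]; ring
    rw [hc1, hc2]
    ring
  rw [Finset.sum_congr rfl hker, Finset.sum_add_distrib, Finset.sum_add_distrib]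
  rw [← Finset.mul_sum, ← Finset.mul_sum, cross_shift α n]
  rw [Pm_diag α n]
  ring

lemma Pm_diag_le (α : ℕ → ℝ) (hα : ∀ i, 1 ≤ i → 0 ≤ α i ∧ α i ≤ 1) (n : ℕ)
    (hB : 0 < ∑ i ∈ Finset.Icc 1 n, α i * (1 - α i)) :
    Pm α n n ≤ 1 / Real.sqrt (Real.pi * ∑ i ∈ Finset.Icc 1 n, α i * (1 - α i)) := by
  set B := ∑ i ∈ Finset.Icc 1 n, α i * (1 - α i) with hBdef
  set hfun : ℝ → ℝ := fun u => (2/Real.pi) * Real.exp (-(4*B) * u^2) with hfun_def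
  have hπ : (0:ℝ) < Real.pi := Real.pi_pos
  -- continuity of the integrand
  have hcontA : Continuous (fun t => Aq α n t) := by
    unfold Aq; exact continuous_finset_sum _ (fun i _ => by fun_prop)
  have hcontB : Continuous (fun t => Bq α n t) := by
    unfold Bq; exact continuous_finset_sum _ (fun i _ => by fun_prop)
  -- pointwise bound
  have hpt : ∀ t ∈ Set.Icc (-(1:ℝ)/2) (1/2),
      ((Aq α n t)^2 + (Bq α n t)^2) * (1 + Real.cos (2*Real.pi*t))
      ≤ (Real.pi * Real.cos (Real.pi*t)) • hfun (Real.sin (Real.pi*t)) := by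
    intro t ht
    obtain ⟨ht1, ht2⟩ := ht
    have hcos_nonneg : 0 ≤ Real.cos (Real.pi*t) := by
      apply Real.cos_nonneg_of_mem_Icc
      constructor
      · nlinarith
      · nlinarith
    have hcos_le : Real.cos (Real.pi*t) ≤ 1 := Real.cos_le_one _
    have hG : (Aq α n t)^2 + (Bq α n t)^2 ≤ Real.exp (-(4*B) * Real.sin (Real.pi*t)^2) := by
      rw [Gq_prod α n t]
      have hle : ∏ i ∈ Finset.Icc 1 n, (1 - 4 * (α i * (1 - α i)) * Real.sin (Real.pi*t)^2)
          ≤ ∏ i ∈ Finset.Icc 1 n, Real.exp (-(4 * (α i * (1 - α i)) * Real.sin (Real.pi*t)^2)) := by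
        apply Finset.prod_le_prod
        · intro i hi
          have h1 := (hα i (Finset.mem_Icc.mp hi).1).1
          have h2 := (hα i (Finset.mem_Icc.mp hi).1).2
          have hs : Real.sin (Real.pi*t)^2 ≤ 1 := Real.sin_sq_le_one _
          have hs0 : 0 ≤ Real.sin (Real.pi*t)^2 := sq_nonneg _
          have hb : α i * (1 - α i) ≤ 1/4 := by nlinarith [sq_nonneg (2*α i - 1)]
          have hb0 : 0 ≤ α i * (1 - α i) := by nlinarith
          have hmm : (α i * (1 - α i)) * Real.sin (Real.pi*t)^2 ≤ (1/4) * 1 :=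
            mul_le_mul hb hs hs0 (by norm_num)
          linarith
        · intro i _
          have := Real.add_one_le_exp (-(4 * (α i * (1 - α i)) * Real.sin (Real.pi*t)^2))
          linarith
      rw [← Real.exp_sum] at hle
      refine hle.trans (le_of_eq ?_)
      congr 1
      rw [show ∑ i ∈ Finset.Icc 1 n, -(4 * (α i * (1 - α i)) * Real.sin (Real.pi*t)^2)
          = ∑ i ∈ Finset.Icc 1 n, (α i * (1 - α i)) * (-(4 * Real.sin (Real.pi*t)^2)) from
        Finset.sum_congr rfl fun i _ => by ring]
      rw [← Finset.sum_mul, ← hBdef]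
      ring
    have hGnn : (0:ℝ) ≤ (Aq α n t)^2 + (Bq α n t)^2 := by positivity
    have hcos2 : 1 + Real.cos (2*Real.pi*t) = 2 * Real.cos (Real.pi*t)^2 := by
      rw [show 2*Real.pi*t = 2*(Real.pi*t) by ring, Real.cos_two_mul]
      ring
    rw [hcos2, smul_eq_mul, hfun_def]
    have hexp_pos : 0 < Real.exp (-(4*B) * Real.sin (Real.pi*t)^2) := Real.exp_pos _
    have step1 : ((Aq α n t)^2 + (Bq α n t)^2) * (2 * Real.cos (Real.pi*t)^2)
        ≤ Real.exp (-(4*B) * Real.sin (Real.pi*t)^2) * (2 * Real.cos (Real.pi*t)^2) := by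
      apply mul_le_mul_of_nonneg_right hG
      positivity
    refine step1.trans ?_
    have : Real.exp (-(4*B) * Real.sin (Real.pi*t)^2) * (2 * Real.cos (Real.pi*t)^2)
        ≤ Real.exp (-(4*B) * Real.sin (Real.pi*t)^2) * (2 * Real.cos (Real.pi*t)) := by
      apply mul_le_mul_of_nonneg_left _ hexp_pos.le
      nlinarith
    refine this.trans (le_of_eq ?_)
    field_simp
  -- integral monotonicity
  have hint1 : IntervalIntegrable
      (fun t => ((Aq α n t)^2 + (Bq α n t)^2) * (1 + Real.cos (2*Real.pi*t)))
      MeasureTheory.volume (-(1:ℝ)/2) (1/2) := by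
    apply Continuous.intervalIntegrable
    have : Continuous (fun t => (Aq α n t)^2 + (Bq α n t)^2) := by
      exact (hcontA.pow 2).add (hcontB.pow 2)
    fun_prop
  have hint2 : IntervalIntegrable
      (fun t => (Real.pi * Real.cos (Real.pi*t)) • hfun (Real.sin (Real.pi*t)))
      MeasureTheory.volume (-(1:ℝ)/2) (1/2) := by
    apply Continuous.intervalIntegrable
    fun_prop
  have mono1 : ∫ t in (-(1:ℝ)/2)..(1/2), ((Aq α n t)^2 + (Bq α n t)^2) * (1 + Real.cos (2*Real.pi*t))
      ≤ ∫ t in (-(1:ℝ)/2)..(1/2), (Real.pi * Real.cos (Real.pi*t)) • hfun (Real.sin (Real.pi*t)) := by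
    apply intervalIntegral.integral_mono_on (by norm_num) hint1 hint2 hpt
  -- substitution
  have hsub : ∫ t in (-(1:ℝ)/2)..(1/2), (Real.pi * Real.cos (Real.pi*t)) • hfun (Real.sin (Real.pi*t))
      = ∫ u in (-1:ℝ)..(1:ℝ), hfun u := by
    have hderiv : ∀ x ∈ Set.uIcc (-(1:ℝ)/2) (1/2),
        HasDerivAt (fun t => Real.sin (Real.pi*t)) (Real.pi * Real.cos (Real.pi*x)) x := by
      intro x _
      have h1 : HasDerivAt (fun t : ℝ => Real.pi*t) Real.pi x := by
        simpa using (hasDerivAt_id x).const_mul Real.pi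
      have := (Real.hasDerivAt_sin (Real.pi*x)).comp x h1
      exact this.congr_deriv (mul_comm _ _)
    have hcont' : ContinuousOn (fun x => Real.pi * Real.cos (Real.pi*x)) (Set.uIcc (-(1:ℝ)/2) (1/2)) := by
      apply Continuous.continuousOn; fun_prop
    have hgc : Continuous hfun := by rw [hfun_def]; fun_prop
    have := intervalIntegral.integral_comp_smul_deriv hderiv hcont' hgc
    rw [show (fun t => (Real.pi * Real.cos (Real.pi*t)) • hfun (Real.sin (Real.pi*t)))
        = (fun x => (Real.pi * Real.cos (Real.pi*x)) • (hfun ∘ fun t => Real.sin (Real.pi*t)) x) from rfl]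
    rw [this]
    congr 1
    · rw [show Real.pi * (-(1:ℝ)/2) = -(Real.pi/2) by ring, Real.sin_neg, Real.sin_pi_div_two]
    · rw [show Real.pi * ((1:ℝ)/2) = Real.pi/2 by ring, Real.sin_pi_div_two]
  -- extend to the whole line
  have hInt : MeasureTheory.Integrable (fun u : ℝ => Real.exp (-(4*B) * u^2)) :=
    integrable_exp_neg_mul_sq (by positivity)
  have hInt' : MeasureTheory.Integrable hfun := by
    rw [hfun_def]; exact hInt.const_mul _
  have ext1 : ∫ u in (-1:ℝ)..(1:ℝ), hfun u ≤ ∫ u : ℝ, hfun u := by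
    rw [intervalIntegral.integral_of_le (by norm_num : (-1:ℝ) ≤ 1)]
    apply MeasureTheory.setIntegral_le_integral hInt'
    filter_upwards with x
    rw [hfun_def]
    positivity
  -- Gaussian value
  have hval : ∫ u : ℝ, hfun u = (2/Real.pi) * Real.sqrt (Real.pi / (4*B)) := by
    rw [hfun_def]
    rw [MeasureTheory.integral_const_mul]
    congr 1
    exact integral_gaussian (4*B)
  -- final algebra
  have halg : (2/Real.pi) * Real.sqrt (Real.pi / (4*B)) = 1 / Real.sqrt (Real.pi * B) := by
    have hBpos : (0:ℝ) < B := hB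
    have h4B : (0:ℝ) < 4*B := by linarith
    have hsq : Real.sqrt (Real.pi / (4*B)) = Real.sqrt (Real.pi * B) / (2*B) := by
      rw [eq_div_iff (by positivity : (2*B) ≠ 0)]
      rw [show (2*B : ℝ) = Real.sqrt ((2*B)^2) from (Real.sqrt_sq (by positivity)).symm]
      rw [← Real.sqrt_mul (by positivity) ]
      congr 1
      field_simp
      ring
    have hsPB : (0:ℝ) < Real.sqrt (Real.pi * B) := Real.sqrt_pos.mpr (by positivity)
    have hmul : Real.sqrt (Real.pi * B) * Real.sqrt (Real.pi * B) = Real.pi * B :=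
      Real.mul_self_sqrt (by positivity)
    rw [hsq, eq_div_iff hsPB.ne']
    have e1 : Real.sqrt Real.pi * Real.sqrt Real.pi = Real.pi := Real.mul_self_sqrt hπ.le
    have e2 : Real.sqrt B * Real.sqrt B = B := Real.mul_self_sqrt hBpos.le
    field_simp
    nlinarith [e1, e2]
  calc Pm α n n
      = ∫ t in (-(1:ℝ)/2)..(1/2), ((Aq α n t)^2 + (Bq α n t)^2) * (1 + Real.cos (2*Real.pi*t)) :=
        (orth α n).symm
    _ ≤ ∫ t in (-(1:ℝ)/2)..(1/2), (Real.pi * Real.cos (Real.pi*t)) • hfun (Real.sin (Real.pi*t)) := mono1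
    _ = ∫ u in (-1:ℝ)..(1:ℝ), hfun u := hsub
    _ ≤ ∫ u : ℝ, hfun u := ext1
    _ = (2/Real.pi) * Real.sqrt (Real.pi / (4*B)) := hval
    _ = 1 / Real.sqrt (Real.pi * B) := halg

section KMabstract
variable {E : Type*} [NormedAddCommGroup E] [NormedSpace ℝ E]

lemma convex_sub (a b c : E) (t : ℝ) :
    t • a + (1 - t) • b - c = t • (a - c) + (1 - t) • (b - c) := by
  have hc : t • c + (1-t) • c = c := by rw [← add_smul]; norm_num
  calc t • a + (1-t) • b - c = t • a - t • c + ((1-t) • b - (1-t) • c) := by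
        nth_rewrite 1 [← hc]; abel
    _ = t • (a - c) + (1-t) • (b - c) := by rw [smul_sub, smul_sub]

lemma norm_convex_le (u v : E) (t : ℝ) (ht0 : 0 ≤ t) (ht1 : t ≤ 1) :
    ‖t • u + (1 - t) • v‖ ≤ t * ‖u‖ + (1 - t) * ‖v‖ := by
  refine (norm_add_le _ _).trans ?_
  rw [norm_smul, norm_smul, Real.norm_eq_abs, Real.norm_eq_abs,
    abs_of_nonneg ht0, abs_of_nonneg (by linarith : (0:ℝ) ≤ 1 - t)]

lemma km_rate (F : E → E) (hF : ∀ x y : E, ‖F x - F y‖ ≤ ‖x - y‖) (h : E) (hfix : F h = h)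
    (lam : ℕ → ℝ) (hlam : ∀ j : ℕ, 1 ≤ j → 0 ≤ lam j ∧ lam j ≤ 1)
    (x : ℕ → E) (hx : ∀ k : ℕ, x (k+1) = lam (k+1) • x k + (1 - lam (k+1)) • F (x k))
    (n : ℕ) (hB : 0 < ∑ i ∈ Finset.Icc 1 n, lam i * (1 - lam i)) :
    ‖F (x n) - x n‖
      ≤ 2 * ‖x 0 - h‖ / Real.sqrt (Real.pi * ∑ i ∈ Finset.Icc 1 n, lam i * (1 - lam i)) := by
  set α : ℕ → ℝ := fun i => 1 - lam i with hαdef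
  have hα : ∀ i, 1 ≤ i → 0 ≤ α i ∧ α i ≤ 1 := by
    intro i hi
    have := hlam i hi
    constructor <;> [skip; skip] <;> simp only [hαdef] <;> linarith [this.1, this.2]
  set R := ‖x 0 - h‖ with hRdef
  set d := 2 * R with hddef
  have hR0 : 0 ≤ R := norm_nonneg _
  have hd0 : 0 ≤ d := by rw [hddef]; linarith
  -- invariance of the ball
  have hxh : ∀ k, ‖x k - h‖ ≤ R := by
    intro k
    induction k with
    | zero => simp [hRdef]
    | succ k ih =>
      rw [hx k]
      have hl := hlam (k+1) (by omega)
      rw [convex_sub (x k) (F (x k)) h (lam (k+1))]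
      refine (norm_convex_le _ _ _ hl.1 hl.2).trans ?_
      have h2 : ‖F (x k) - h‖ ≤ ‖x k - h‖ := by
        calc ‖F (x k) - h‖ = ‖F (x k) - F h‖ := by rw [hfix]
          _ ≤ ‖x k - h‖ := hF _ _
      nlinarith [hl.1, hl.2, norm_nonneg (x k - h), ih, h2]
  have hFxh : ∀ k, ‖F (x k) - h‖ ≤ R := by
    intro k
    calc ‖F (x k) - h‖ = ‖F (x k) - F h‖ := by rw [hfix]
      _ ≤ ‖x k - h‖ := hF _ _
      _ ≤ R := hxh k
  -- triangle induction
  have key : ∀ N : ℕ, ∀ m : ℕ, m ≤ N →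
      ‖F (x N) - x m‖ ≤ d * Pm α m N ∧ ‖x m - x N‖ ≤ d * Qm α m N := by
    intro N
    induction N with
    | zero =>
      intro m hm
      interval_cases m
      constructor
      · rw [Pm_zero α 0, mul_one, hddef]
        calc ‖F (x 0) - x 0‖ ≤ ‖F (x 0) - h‖ + ‖h - x 0‖ := norm_sub_le_norm_sub_add_norm_sub _ _ _
          _ ≤ R + R := by
            refine add_le_add (hFxh 0) ?_
            rw [norm_sub_rev]
          _ = 2 * R := by ring
      · simp [Qm_diag α 0]
    | succ N ih =>
      intro m hm
      -- first the B-part for all m ≤ N+1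
      have hBpart : ∀ m' : ℕ, m' ≤ N + 1 → ‖x m' - x (N+1)‖ ≤ d * Qm α m' (N+1) := by
        intro m' hm'
        rcases Nat.lt_or_ge m' (N+1) with hlt | hge
        · have hm'N : m' ≤ N := by omega
          obtain ⟨ihD, ihB⟩ := ih m' hm'N
          have hl := hlam (N+1) (by omega)
          rw [norm_sub_rev, hx N, convex_sub (x N) (F (x N)) (x m') (lam (N+1))]
          refine (norm_convex_le _ _ _ hl.1 hl.2).trans ?_
          rw [Qm_succ_n α m' N]
          have e1 : ‖x N - x m'‖ ≤ d * Qm α m' N := by rw [norm_sub_rev]; exact ihB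
          have hαn : α (N+1) = 1 - lam (N+1) := rfl
          rw [show (1 - α (N+1)) = lam (N+1) by rw [hαn]; ring, hαn]
          nlinarith [hl.1, hl.2, e1, ihD, norm_nonneg (x N - x m'), norm_nonneg (F (x N) - x m')]
        · have : m' = N + 1 := by omega
          subst this
          simp [Qm_diag α (N+1)]
      rcases Nat.eq_or_lt_of_le hm with rfl | hmlt
      · -- need D at (m, m); handled by inner induction below anyway
        exact ⟨by
          -- inner induction on m to get the D-part at level N+1
          have hD : ∀ m' : ℕ, m' ≤ N + 1 → ‖F (x (N+1)) - x m'‖ ≤ d * Pm α m' (N+1) := by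
            intro m'
            induction m' with
            | zero =>
              intro _
              rw [Pm_zero α (N+1), mul_one, hddef]
              calc ‖F (x (N+1)) - x 0‖ ≤ ‖F (x (N+1)) - h‖ + ‖h - x 0‖ :=
                    norm_sub_le_norm_sub_add_norm_sub _ _ _
                _ ≤ R + R := by
                  refine add_le_add (hFxh (N+1)) ?_
                  rw [norm_sub_rev]
                _ = 2 * R := by ring
            | succ m' ihm =>
              intro hm'
              have h1 := ihm (by omega)
              have h2 := hBpart m' (by omega)
              have hl := hlam (m'+1) (by omega)
              rw [hx m']
              rw [show F (x (N+1)) - (lam (m'+1) • x m' + (1 - lam (m'+1)) • F (x m'))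
                  = -(lam (m'+1) • (x m' - F (x (N+1)))
                      + (1 - lam (m'+1)) • (F (x m') - F (x (N+1)))) by
                rw [← convex_sub (x m') (F (x m')) (F (x (N+1))) (lam (m'+1))]; abel]
              rw [norm_neg]
              refine (norm_convex_le _ _ _ hl.1 hl.2).trans ?_
              rw [Pm_succ_m α m' (N+1)]
              have e1 : ‖x m' - F (x (N+1))‖ ≤ d * Pm α m' (N+1) := by
                rw [norm_sub_rev]; exact h1
              have e2 : ‖F (x m') - F (x (N+1))‖ ≤ d * Qm α m' (N+1) := by
                refine (hF _ _).trans ?_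
                rw [norm_sub_rev] at h2 ⊢
                exact h2
              have hαm : α (m'+1) = 1 - lam (m'+1) := rfl
              rw [show (1 - α (m'+1)) = lam (m'+1) by rw [hαm]; ring, hαm]
              nlinarith [hl.1, hl.2, e1, e2,
                norm_nonneg (x m' - F (x (N+1))), norm_nonneg (F (x m') - F (x (N+1)))]
          exact hD (N+1) le_rfl, hBpart (N+1) le_rfl⟩
      · -- m < N+1 : same inner induction gives D-part
        have hD : ∀ m' : ℕ, m' ≤ N + 1 → ‖F (x (N+1)) - x m'‖ ≤ d * Pm α m' (N+1) := by
          intro m'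
          induction m' with
          | zero =>
            intro _
            rw [Pm_zero α (N+1), mul_one, hddef]
            calc ‖F (x (N+1)) - x 0‖ ≤ ‖F (x (N+1)) - h‖ + ‖h - x 0‖ :=
                  norm_sub_le_norm_sub_add_norm_sub _ _ _
              _ ≤ R + R := by
                refine add_le_add (hFxh (N+1)) ?_
                rw [norm_sub_rev]
              _ = 2 * R := by ring
          | succ m' ihm =>
            intro hm'
            have h1 := ihm (by omega)
            have h2 := hBpart m' (by omega)
            have hl := hlam (m'+1) (by omega)
            rw [hx m']
            rw [show F (x (N+1)) - (lam (m'+1) • x m' + (1 - lam (m'+1)) • F (x m'))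
                = -(lam (m'+1) • (x m' - F (x (N+1)))
                    + (1 - lam (m'+1)) • (F (x m') - F (x (N+1)))) by
              rw [← convex_sub (x m') (F (x m')) (F (x (N+1))) (lam (m'+1))]; abel]
            rw [norm_neg]
            refine (norm_convex_le _ _ _ hl.1 hl.2).trans ?_
            rw [Pm_succ_m α m' (N+1)]
            have e1 : ‖x m' - F (x (N+1))‖ ≤ d * Pm α m' (N+1) := by
              rw [norm_sub_rev]; exact h1
            have e2 : ‖F (x m') - F (x (N+1))‖ ≤ d * Qm α m' (N+1) := by
              refine (hF _ _).trans ?_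
              rw [norm_sub_rev] at h2 ⊢
              exact h2
            have hαm : α (m'+1) = 1 - lam (m'+1) := rfl
            rw [show (1 - α (m'+1)) = lam (m'+1) by rw [hαm]; ring, hαm]
            nlinarith [hl.1, hl.2, e1, e2,
              norm_nonneg (x m' - F (x (N+1))), norm_nonneg (F (x m') - F (x (N+1)))]
        exact ⟨hD m hm, hBpart m hm⟩
  -- conclude
  have hBα : ∑ i ∈ Finset.Icc 1 n, α i * (1 - α i) = ∑ i ∈ Finset.Icc 1 n, lam i * (1 - lam i) :=
    Finset.sum_congr rfl fun i _ => by simp only [hαdef]; ring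
  have hfinal := (key n n le_rfl).1
  have hPle := Pm_diag_le α hα n (by rw [hBα]; exact hB)
  calc ‖F (x n) - x n‖ ≤ d * Pm α n n := hfinal
    _ ≤ d * (1 / Real.sqrt (Real.pi * ∑ i ∈ Finset.Icc 1 n, α i * (1 - α i))) := by
        exact mul_le_mul_of_nonneg_left hPle hd0
    _ = 2 * ‖x 0 - h‖ / Real.sqrt (Real.pi * ∑ i ∈ Finset.Icc 1 n, lam i * (1 - lam i)) := by
        rw [hBα, hddef, hRdef]; ring

end KMabstract

end KMRate
end

/-! ### MDP helper lemmas -/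

lemma sup'_add_const' {ι : Type _} (s : Finset ι) (hs : s.Nonempty) (f : ι → ℝ) (b : ℝ) :
    s.sup' hs (fun a => f a + b) = s.sup' hs f + b := by
  apply le_antisymm
  · exact Finset.sup'_le _ _ fun a ha => add_le_add_left (Finset.le_sup' f ha) b
  · obtain ⟨a, ha, hEq⟩ := Finset.exists_mem_eq_sup' hs f
    rw [hEq]
    exact Finset.le_sup' (fun a => f a + b) ha

lemma Psum_bound (M : FinMDP S A) (s : S) (a : A) (u : S → ℝ) :
    |∑ s', M.P s a s' * u s'| ≤ ‖u‖ := by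
  calc |∑ s', M.P s a s' * u s'| ≤ ∑ s', |M.P s a s' * u s'| := Finset.abs_sum_le_sum_abs _ _
    _ ≤ ∑ s', M.P s a s' * ‖u‖ := by
        refine Finset.sum_le_sum fun s' _ => ?_
        rw [abs_mul, abs_of_nonneg (M.P_nonneg s a s')]
        refine mul_le_mul_of_nonneg_left ?_ (M.P_nonneg s a s')
        rw [← Real.norm_eq_abs]
        exact norm_le_pi_norm u s'
    _ = ‖u‖ := by rw [← Finset.sum_mul, M.P_sum_one s a, one_mul]

lemma Psum_sub (M : FinMDP S A) (s : S) (a : A) (u v : S → ℝ) :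
    ∑ s', M.P s a s' * u s' - ∑ s', M.P s a s' * v s' = ∑ s', M.P s a s' * (u - v) s' := by
  rw [← Finset.sum_sub_distrib]
  exact Finset.sum_congr rfl fun s' _ => by simp [Pi.sub_apply]; ring

lemma bellman_le (M : FinMDP S A) (V W : S → ℝ) (s : S) :
    bellman M V s ≤ bellman M W s + ‖V - W‖ := by
  unfold bellman
  refine Finset.sup'_le _ _ fun a _ => ?_
  have h1 : ∑ s', M.P s a s' * V s' ≤ ∑ s', M.P s a s' * W s' + ‖V - W‖ := by
    have := (abs_le.mp (Psum_bound M s a (V - W))).2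
    rw [← Psum_sub M s a V W] at this
    linarith
  calc M.r s a + ∑ s', M.P s a s' * V s' ≤ (M.r s a + ∑ s', M.P s a s' * W s') + ‖V - W‖ := by
        linarith
    _ ≤ Finset.univ.sup' Finset.univ_nonempty (fun a => M.r s a + ∑ s', M.P s a s' * W s') + ‖V - W‖ := by
        exact add_le_add_left
          (Finset.le_sup' (fun a => M.r s a + ∑ s', M.P s a s' * W s') (Finset.mem_univ a)) _

lemma bellman_nonexp (M : FinMDP S A) (V W : S → ℝ) :
    ‖bellman M V - bellman M W‖ ≤ ‖V - W‖ := by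
  rw [pi_norm_le_iff_of_nonneg (norm_nonneg _)]
  intro s
  rw [Pi.sub_apply, Real.norm_eq_abs, abs_le]
  constructor
  · have := bellman_le M W V s
    rw [norm_sub_rev] at this
    linarith
  · have := bellman_le M V W s
    linarith

lemma g_action (M : FinMDP S A) (g : S → ℝ) (hcomm : ∀ p : S → A, Pop M p g = g)
    (s : S) (a : A) : ∑ s', M.P s a s' * g s' = g s := by
  have := congrFun (hcomm (fun _ => a)) s
  simpa [Pop] using this

lemma bellman_shift (M : FinMDP S A) (g : S → ℝ) (hcomm : ∀ p : S → A, Pop M p g = g)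
    (W : S → ℝ) (c : ℝ) (s : S) :
    bellman M (fun x => W x + c * g x) s = bellman M W s + c * g s := by
  unfold bellman
  rw [← sup'_add_const']
  refine Finset.sup'_congr _ rfl fun a _ => ?_
  have hs : ∑ s', M.P s a s' * (W s' + c * g s')
      = (∑ s', M.P s a s' * W s') + c * ∑ s', M.P s a s' * g s' := by
    rw [Finset.mul_sum, ← Finset.sum_add_distrib]
    exact Finset.sum_congr rfl fun s' _ => by ring
  rw [hs, g_action M g hcomm s a]
  ring

/-! ### average-reward part -/

lemma avg_close (M : FinMDP S A) (g : S → ℝ)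
    (hcomm : ∀ p : S → A, Pop M p g = g)
    (p : S → A) (W : S → ℝ) (hgr : IsGreedy M p W) :
    ‖g - avgReward M p‖ ≤ ‖bellman M W - W - g‖ := by
  set e : S → ℝ := bellman M W - W - g with he
  set c := ‖e‖ with hcdef
  have hc0 : (0:ℝ) ≤ c := norm_nonneg _
  set K := 2 * ‖W‖ with hK
  have hK0 : (0:ℝ) ≤ K := by rw [hK]; positivity
  -- Pop is additive and sup-norm nonexpansive
  have popnorm : ∀ u : S → ℝ, ‖Pop M p u‖ ≤ ‖u‖ := by
    intro u
    rw [pi_norm_le_iff_of_nonneg (norm_nonneg _)]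
    intro s
    rw [Real.norm_eq_abs]
    exact Psum_bound M s (p s) u
  have popiter : ∀ (t : ℕ) (u : S → ℝ), ‖(Pop M p)^[t] u‖ ≤ ‖u‖ := by
    intro t
    induction t with
    | zero => intro u; simp
    | succ t ih =>
      intro u
      rw [Function.iterate_succ_apply' (Pop M p) t u]
      exact (popnorm _).trans (ih u)
  have hPlin : ∀ u v w z : S → ℝ, Pop M p (u - v + w + z)
      = Pop M p u - Pop M p v + Pop M p w + Pop M p z := by
    intro u v w z
    funext s
    simp only [Pop, Pi.add_apply, Pi.sub_apply]
    have hterm : ∀ x, M.P s (p s) x * (u x - v x + w x + z x)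
        = M.P s (p s) x * u x - M.P s (p s) x * v x + M.P s (p s) x * w x + M.P s (p s) x * z x :=
      fun x => by ring
    rw [Finset.sum_congr rfl (fun x _ => hterm x), Finset.sum_add_distrib,
      Finset.sum_add_distrib, Finset.sum_sub_distrib]
  have hr : rPol M p = W + g + e - Pop M p W := by
    funext s
    have := congrFun hgr s
    simp only [Pi.add_apply, Pi.sub_apply] at this ⊢
    simp only [he, Pi.sub_apply]
    linarith
  have hiter : ∀ t : ℕ, (Pop M p)^[t] (rPol M p)
      = (Pop M p)^[t] W - (Pop M p)^[t+1] W + g + (Pop M p)^[t] e := by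
    intro t
    induction t with
    | zero =>
      simp only [Function.iterate_zero, id_eq, Function.iterate_one]
      rw [hr]
      abel
    | succ t ih =>
      rw [Function.iterate_succ_apply' (Pop M p) t (rPol M p), ih, hPlin]
      rw [← Function.iterate_succ_apply' (Pop M p) t W,
        ← Function.iterate_succ_apply' (Pop M p) (t+1) W,
        ← Function.iterate_succ_apply' (Pop M p) t e,
        hcomm p]
  -- pointwise liminf analysis
  rw [pi_norm_le_iff_of_nonneg hc0]
  intro s
  rw [Pi.sub_apply, Real.norm_eq_abs]
  set a : ℕ → ℝ := fun T => (1/(T:ℝ)) * ∑ t ∈ Finset.range T, ((Pop M p)^[t] (rPol M p)) s with ha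
  have havg : avgReward M p s = Filter.liminf a Filter.atTop := rfl
  have hKey : ∀ T : ℕ, 1 ≤ T → |a T - g s| ≤ c + K/(T:ℝ) := by
    intro T hT
    have hTpos : (0:ℝ) < (T:ℝ) := by exact_mod_cast hT
    have hsum : ∑ t ∈ Finset.range T, ((Pop M p)^[t] (rPol M p)) s
        = (W s - ((Pop M p)^[T] W) s) + T * g s + ∑ t ∈ Finset.range T, ((Pop M p)^[t] e) s := by
      have h1 : ∀ t, ((Pop M p)^[t] (rPol M p)) s
          = (((Pop M p)^[t] W) s - ((Pop M p)^[t+1] W) s) + g s + ((Pop M p)^[t] e) s := by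
        intro t
        rw [hiter t]
        simp [Pi.add_apply, Pi.sub_apply]
      rw [Finset.sum_congr rfl fun t _ => h1 t]
      rw [Finset.sum_add_distrib, Finset.sum_add_distrib, Finset.sum_range_sub']
      simp only [Function.iterate_zero, id_eq, Finset.sum_const, Finset.card_range,
        nsmul_eq_mul]
    have hWb : |W s - ((Pop M p)^[T] W) s| ≤ K := by
      have h1 : |W s| ≤ ‖W‖ := by rw [← Real.norm_eq_abs]; exact norm_le_pi_norm W s
      have h2 : |((Pop M p)^[T] W) s| ≤ ‖W‖ := by
        have := norm_le_pi_norm ((Pop M p)^[T] W) s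
        rw [Real.norm_eq_abs] at this
        exact this.trans (popiter T W)
      rw [hK]
      have := abs_sub (W s) (((Pop M p)^[T] W) s)
      calc |W s - ((Pop M p)^[T] W) s| ≤ |W s| + |((Pop M p)^[T] W) s| := abs_sub _ _
        _ ≤ 2 * ‖W‖ := by linarith
    have heb : |∑ t ∈ Finset.range T, ((Pop M p)^[t] e) s| ≤ T * c := by
      calc |∑ t ∈ Finset.range T, ((Pop M p)^[t] e) s|
          ≤ ∑ t ∈ Finset.range T, |((Pop M p)^[t] e) s| := Finset.abs_sum_le_sum_abs _ _
        _ ≤ ∑ t ∈ Finset.range T, c := by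
            refine Finset.sum_le_sum fun t _ => ?_
            have := norm_le_pi_norm ((Pop M p)^[t] e) s
            rw [Real.norm_eq_abs] at this
            exact this.trans (popiter t e)
        _ = T * c := by rw [Finset.sum_const, Finset.card_range, nsmul_eq_mul]
    have : a T - g s = (1/(T:ℝ)) * ((W s - ((Pop M p)^[T] W) s)
        + ∑ t ∈ Finset.range T, ((Pop M p)^[t] e) s) := by
      rw [ha]
      simp only
      rw [hsum]
      field_simp
      ring
    rw [this, abs_mul, abs_of_nonneg (by positivity : (0:ℝ) ≤ 1/(T:ℝ))]
    have habs : |(W s - ((Pop M p)^[T] W) s) + ∑ t ∈ Finset.range T, ((Pop M p)^[t] e) s|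
        ≤ K + T * c := by
      calc _ ≤ |W s - ((Pop M p)^[T] W) s| + |∑ t ∈ Finset.range T, ((Pop M p)^[t] e) s| :=
            abs_add_le _ _
        _ ≤ K + T * c := add_le_add hWb heb
    calc (1/(T:ℝ)) * |(W s - ((Pop M p)^[T] W) s) + ∑ t ∈ Finset.range T, ((Pop M p)^[t] e) s|
        ≤ (1/(T:ℝ)) * (K + T * c) := by
          exact mul_le_mul_of_nonneg_left habs (by positivity)
      _ = c + K/(T:ℝ) := by field_simp; ring
  -- eventual bounds
  have hub : ∀ᶠ T : ℕ in Filter.atTop, a T ≤ g s + c + K/(T:ℝ) := by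
    filter_upwards [Filter.eventually_ge_atTop 1] with T hT
    have := (abs_le.mp (hKey T hT)).2
    linarith
  have hlb : ∀ᶠ T : ℕ in Filter.atTop, g s - c - K/(T:ℝ) ≤ a T := by
    filter_upwards [Filter.eventually_ge_atTop 1] with T hT
    have := (abs_le.mp (hKey T hT)).1
    linarith
  have hKT : ∀ T : ℕ, 1 ≤ T → K/(T:ℝ) ≤ K := by
    intro T hT
    have hT1 : (1:ℝ) ≤ (T:ℝ) := by exact_mod_cast hT
    rw [div_le_iff₀ (by linarith)]
    nlinarith
  have hbdd_above : Filter.IsBoundedUnder (· ≤ ·) Filter.atTop a := by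
    refine ⟨g s + c + K, Filter.eventually_map.mpr ?_⟩
    filter_upwards [hub, Filter.eventually_ge_atTop 1] with T h1 h2
    have := hKT T h2
    linarith
  have hbdd_below : Filter.IsBoundedUnder (· ≥ ·) Filter.atTop a := by
    refine ⟨g s - c - K, Filter.eventually_map.mpr ?_⟩
    filter_upwards [hlb, Filter.eventually_ge_atTop 1] with T h1 h2
    have := hKT T h2
    simp only [ge_iff_le]
    linarith
  have htend : Filter.Tendsto (fun T : ℕ => K/(T:ℝ)) Filter.atTop (nhds 0) :=
    tendsto_const_div_atTop_nhds_zero_nat K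
  -- liminf ≤ g s + c
  have hup : Filter.liminf a Filter.atTop ≤ g s + c := by
    refine Filter.liminf_le_of_le hbdd_below ?_
    intro b hb
    have hcomb : ∀ᶠ T : ℕ in Filter.atTop, b ≤ g s + c + K/(T:ℝ) := by
      filter_upwards [hb, hub] with T h1 h2; linarith
    have htend2 : Filter.Tendsto (fun T : ℕ => g s + c + K/(T:ℝ)) Filter.atTop
        (nhds (g s + c)) := by
      have := (tendsto_const_nhds (x := g s + c) (f := Filter.atTop (α := ℕ))).add htend
      simpa using this
    exact ge_of_tendsto htend2 hcomb
  -- g s - c ≤ liminf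
  have hdown : g s - c ≤ Filter.liminf a Filter.atTop := by
    have hco : Filter.IsCoboundedUnder (· ≥ ·) Filter.atTop a :=
      hbdd_above.isCoboundedUnder_ge
    have hstep : ∀ ε : ℝ, 0 < ε → g s - c - ε ≤ Filter.liminf a Filter.atTop := by
      intro ε hε
      refine Filter.le_liminf_of_le hco ?_
      have hev : ∀ᶠ T : ℕ in Filter.atTop, K/(T:ℝ) < ε := htend.eventually (gt_mem_nhds hε)
      filter_upwards [hlb, hev] with T h1 h2
      linarith
    by_contra hcon
    push_neg at hcon
    have := hstep ((g s - c - Filter.liminf a Filter.atTop)/2) (by linarith)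
    linarith
  rw [havg, abs_le]
  constructor <;> linarith

/-! ### main theorem -/

/-- Corollary (Rx-VI, MDP with `P^π g⋆ = g⋆` for all policies, `0 < λ_j < 1`):
`O(1/√(∑ λᵢ(1−λᵢ)))` rate on the Bellman and policy errors. -/
theorem rxvi_wc_bellman_rate
    (M : FinMDP S A) (g h : S → ℝ) (hsol : IsMBESolution M g h)
    (hcomm : ∀ p : S → A, Pop M p g = g)
    (lam : ℕ → ℝ) (hlam : ∀ j : ℕ, 1 ≤ j → lam j ∈ Set.Ico (0 : ℝ) 1)
    (hpos : ∀ j : ℕ, 1 ≤ j → 0 < lam j)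
    (V : ℕ → S → ℝ) (pol : ℕ → S → A)
    (hV : ∀ k : ℕ, V (k + 1) = lam (k + 1) • V k + (1 - lam (k + 1)) • bellman M (V k))
    (hpol : ∀ k : ℕ, IsGreedy M (pol k) (V k)) :
    ∀ k : ℕ, 1 ≤ k →
      ‖g - avgReward M (pol k)‖ ≤ ‖bellman M (V k) - V k - g‖ ∧
      ‖bellman M (V k) - V k - g‖ ≤
        2 * ‖V 0 - h‖ /
          Real.sqrt (Real.pi * ∑ i ∈ Finset.Icc 1 k, lam i * (1 - lam i)) := by
  obtain ⟨hsol1, hsol2, hsol3⟩ := hsol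
  intro k hk
  set G : ℕ → ℝ := fun j => ∑ i ∈ Finset.Icc 1 j, (1 - lam i) with hG
  set F : (S → ℝ) → (S → ℝ) := fun W => bellman M W - g with hF
  set U : ℕ → S → ℝ := fun j => V j - G j • g with hU
  have hFfix : F h = h := by
    funext s
    simp only [hF, Pi.sub_apply]
    rw [hsol2 s]
    ring
  have hFne : ∀ x y : S → ℝ, ‖F x - F y‖ ≤ ‖x - y‖ := by
    intro x y
    have hfe : F x - F y = bellman M x - bellman M y := by
      simp only [hF]
      abel
    rw [hfe]
    exact bellman_nonexp M x y
  have hbU : ∀ (j : ℕ) (s : S), bellman M (U j) s = bellman M (V j) s - G j * g s := by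
    intro j s
    have h1 : U j = fun x => V j x + (-(G j)) * g x := by
      funext x
      simp only [hU, Pi.sub_apply, Pi.smul_apply, smul_eq_mul]
      ring
    rw [h1, bellman_shift M g hcomm (V j) (-(G j)) s]
    ring
  have hGsucc : ∀ j : ℕ, G (j+1) = G j + (1 - lam (j+1)) := by
    intro j
    simp only [hG]
    rw [Finset.sum_Icc_succ_top (by omega : 1 ≤ j+1)]
  have hUrec : ∀ j : ℕ, U (j+1) = lam (j+1) • U j + (1 - lam (j+1)) • F (U j) := by
    intro j
    funext s
    have hVs := congrFun (hV j) s
    simp only [Pi.add_apply, Pi.smul_apply, smul_eq_mul] at hVs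
    simp only [hU, hF, Pi.sub_apply, Pi.add_apply, Pi.smul_apply, smul_eq_mul]
    have hbUj := hbU j s
    simp only [hU, Pi.sub_apply, Pi.smul_apply, smul_eq_mul] at hbUj
    rw [hVs, hbUj, hGsucc j]
    ring
  have hres : bellman M (V k) - V k - g = F (U k) - U k := by
    funext s
    have hbUk := hbU k s
    simp only [hU, hF, Pi.sub_apply, Pi.smul_apply, smul_eq_mul] at hbUk ⊢
    rw [hbUk]
    ring
  have hB : 0 < ∑ i ∈ Finset.Icc 1 k, lam i * (1 - lam i) := by
    refine Finset.sum_pos (fun i hi => ?_) ?_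
    · have hi1 := (Finset.mem_Icc.mp hi).1
      have h1 := hpos i hi1
      have h2 := (hlam i hi1).2
      have : (0:ℝ) < 1 - lam i := by linarith
      exact mul_pos h1 this
    · exact ⟨1, Finset.mem_Icc.mpr ⟨le_refl 1, hk⟩⟩
  have hU0 : U 0 = V 0 := by
    funext s
    simp [hU, hG]
  have hkm := KMRate.km_rate F hFne h hFfix lam
    (fun j hj => ⟨(hlam j hj).1, le_of_lt (hlam j hj).2⟩) U hUrec k hB
  rw [hU0] at hkm
  constructor
  · exact avg_close M g hcomm (pol k) (V k) (hpol k)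
  · rw [hres]
    exact hkm
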